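/- arXiv:math/0606698 — 4 statements merged into one kernel-verified Lean document; each statement's English description precedes it below -/
import Mathlib

section
/- Let R be a commutative ring and M a free R-module of rank 2m equipped with a symmetric bilinear form B that is perfect (i.e., the induced R-linear map M → M* = Hom_R(M, R) is an isomorphism). Suppose M = M₁ ⊕ M₂ where M₁ and M₂ are free R-submodules of rank m with B(M₁, M₁) = 0 and B(M₂, M₂) = 0. Then there exists an R-basis e₁, f₁, e₂, f₂, …, e_m, f_m of M with each eᵢ ∈ M₁ and each fᵢ ∈ M₂ such that B(eᵢ, fⱼ) = δᵢⱼ, B(eᵢ, eⱼ) = 0, and B(fᵢ, fⱼ) = 0 for all i, j; equivalently, the Gram matrix of B in this basis is the block-diagonal matrix J(2m) with m diagonal blocks [[0,1],[1,0]]. -/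
/-!
Because `M₁` and `M₂` are complementary and totally isotropic, `x ↦ B x` restricts to an
isomorphism `M₁ ≃ Dual M₂`. It is injective since `B x` already vanishes on `M₁` for `x ∈ M₁`;
it is surjective since a functional on `M₂`, extended by zero on `M₁`, is some `B z`, and the
`M₂`-component of `z` contributes nothing on `M₂`. Pulling back the dual basis of a basis of `M₂`
along this isomorphism gives the `eᵢ`; that basis of `M₂` gives the `fᵢ`.
-/

namespace LinearMap

variable {R M : Type*} [CommRing R] [AddCommGroup M] [Module R M]
  {B : M →ₗ[R] M →ₗ[R] R} {M₁ M₂ : Submodule R M}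

theorem injective_compl₁₂_subtype_of_isCompl (hB : Function.Injective B)
    (hcompl : IsCompl M₁ M₂) (h₁ : ∀ x ∈ M₁, ∀ y ∈ M₁, B x y = 0) :
    Function.Injective (B.compl₁₂ M₁.subtype M₂.subtype) := by
  rw [← ker_eq_bot, ker_eq_bot']
  intro x hx
  have hBx : B x = 0 := by
    ext z
    obtain ⟨z₁, z₂, hz₁, hz₂, rfl⟩ := Submodule.codisjoint_iff_exists_add_eq.mp hcompl.2 z
    have hx₂ : B x z₂ = 0 := LinearMap.congr_fun hx ⟨z₂, hz₂⟩
    simp [h₁ x x.2 z₁ hz₁, hx₂]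
  exact Subtype.ext (hB (hBx.trans (map_zero B).symm))

theorem surjective_compl₁₂_subtype_of_isCompl (hB : Function.Surjective B)
    (hcompl : IsCompl M₁ M₂) (h₂ : ∀ x ∈ M₂, ∀ y ∈ M₂, B x y = 0) :
    Function.Surjective (B.compl₁₂ M₁.subtype M₂.subtype) := by
  intro φ
  obtain ⟨z, hz⟩ := hB (φ ∘ₗ M₂.projectionOnto M₁ hcompl.symm)
  obtain ⟨z₁, z₂, hz₁, hz₂, rfl⟩ := Submodule.codisjoint_iff_exists_add_eq.mp hcompl.2 z
  refine ⟨⟨z₁, hz₁⟩, LinearMap.ext fun y => ?_⟩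
  have hzy : B (z₁ + z₂) y = φ y := by
    rw [hz]
    simp [Submodule.projectionOnto_apply_left]
  simpa [h₂ z₂ hz₂ y y.2] using hzy

theorem exists_basis_dual_of_isCompl {ι : Type*} [Finite ι] [DecidableEq ι]
    (hB : Function.Bijective B) (hcompl : IsCompl M₁ M₂)
    (h₁ : ∀ x ∈ M₁, ∀ y ∈ M₁, B x y = 0) (h₂ : ∀ x ∈ M₂, ∀ y ∈ M₂, B x y = 0)
    (b₂ : Module.Basis ι R M₂) :
    ∃ e : Module.Basis ι R M₁, ∀ i j, B (e i) (b₂ j) = if i = j then 1 else 0 := by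
  let E : M₁ ≃ₗ[R] Module.Dual R M₂ := .ofBijective (B.compl₁₂ M₁.subtype M₂.subtype)
    ⟨injective_compl₁₂_subtype_of_isCompl hB.1 hcompl h₁,
      surjective_compl₁₂_subtype_of_isCompl hB.2 hcompl h₂⟩
  refine ⟨b₂.dualBasis.map E.symm, fun i j => ?_⟩
  calc B (E.symm (b₂.dualBasis i)) (b₂ j) = E (E.symm (b₂.dualBasis i)) (b₂ j) := rfl
    _ = b₂.dualBasis i (b₂ j) := by rw [E.apply_symm_apply]
    _ = if i = j then 1 else 0 := by simp_rw [b₂.dualBasis_apply_self, eq_comm]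

end LinearMap

theorem exists_hyperbolic_basis_general (R : Type*) [CommRing R]
    (M : Type*) [AddCommGroup M] [Module R M] (m : ℕ)
    (B : M →ₗ[R] M →ₗ[R] R)
    (hperf : Function.Bijective fun x : M => B x)
    (M₁ M₂ : Submodule R M)
    (b₂ : Module.Basis (Fin m) R M₂)
    (hcompl : IsCompl M₁ M₂)
    (h₁ : ∀ x ∈ M₁, ∀ y ∈ M₁, B x y = 0)
    (h₂ : ∀ x ∈ M₂, ∀ y ∈ M₂, B x y = 0) :
    ∃ (e f : Fin m → M) (bas : Module.Basis (Fin m ⊕ Fin m) R M),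
      (∀ i, e i ∈ M₁) ∧ (∀ i, f i ∈ M₂) ∧
      (∀ i, bas (Sum.inl i) = e i) ∧ (∀ i, bas (Sum.inr i) = f i) ∧
      (∀ i j, B (e i) (f j) = if i = j then 1 else 0) ∧
      (∀ i j, B (e i) (e j) = 0) ∧
      (∀ i j, B (f i) (f j) = 0) := by
  obtain ⟨b₁, hdual⟩ := LinearMap.exists_basis_dual_of_isCompl hperf hcompl h₁ h₂ b₂
  refine ⟨fun i => b₁ i, fun i => b₂ i,
    (b₁.prod b₂).map (Submodule.prodEquivOfIsCompl M₁ M₂ hcompl),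
    fun i => (b₁ i).2, fun i => (b₂ i).2, fun i => ?_, fun i => ?_, hdual,
    fun i j => h₁ _ (b₁ i).2 _ (b₁ j).2, fun i j => h₂ _ (b₂ i).2 _ (b₂ j).2⟩ <;>
  simp [Submodule.coe_prodEquivOfIsCompl']

/-- Let `R` be a commutative ring and `M` a free `R`-module of rank `2m` equipped with a
perfect symmetric bilinear form `B`.  If `M = M₁ ⊕ M₂` with `M₁`, `M₂` free submodules of
rank `m` that are totally isotropic for `B`, then there is a basis
`e₁, f₁, …, e_m, f_m` of `M` with `eᵢ ∈ M₁`, `fᵢ ∈ M₂`, `B(eᵢ, fⱼ) = δᵢⱼ`,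
`B(eᵢ, eⱼ) = 0` and `B(fᵢ, fⱼ) = 0`; i.e. the Gram matrix of `B` in this basis is the
block-diagonal matrix `J(2m)` with `m` blocks `[[0,1],[1,0]]`. -/
theorem exists_hyperbolic_basis (R : Type*) [CommRing R]
    (M : Type*) [AddCommGroup M] [Module R M] (m : ℕ)
    (b : Module.Basis (Fin (2*m)) R M)
    (B : M →ₗ[R] M →ₗ[R] R)
    (hsymm : ∀ x y : M, B x y = B y x)
    (hperf : Function.Bijective fun x : M => B x)
    (M₁ M₂ : Submodule R M)
    (b₁ : Module.Basis (Fin m) R M₁) (b₂ : Module.Basis (Fin m) R M₂)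
    (hcompl : IsCompl M₁ M₂)
    (h₁ : ∀ x ∈ M₁, ∀ y ∈ M₁, B x y = 0)
    (h₂ : ∀ x ∈ M₂, ∀ y ∈ M₂, B x y = 0) :
    ∃ (e f : Fin m → M) (bas : Module.Basis (Fin m ⊕ Fin m) R M),
      (∀ i, e i ∈ M₁) ∧ (∀ i, f i ∈ M₂) ∧
      (∀ i, bas (Sum.inl i) = e i) ∧ (∀ i, bas (Sum.inr i) = f i) ∧
      (∀ i j, B (e i) (f j) = if i = j then 1 else 0) ∧
      (∀ i j, B (e i) (e j) = 0) ∧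
      (∀ i j, B (f i) (f j) = 0) :=
  exists_hyperbolic_basis_general R M m B hperf M₁ M₂ b₂ hcompl h₁ h₂
end

section
/- Let 𝔽 be an algebraic closure of the field 𝔽₂ with two elements, W(𝔽) its ring of Witt vectors, and B(𝔽) the field of fractions of W(𝔽). Let F be a finite field extension of ℚ₂ such that there exists a ℚ₂-algebra homomorphism F → B(𝔽). Then F is unramified over ℚ₂: the ramification index of the integral closure O_F of ℤ₂ in F over ℤ₂ equals 1, i.e., 2 generates the maximal ideal of the discrete valuation ring O_F. -/
noncomputable section

/-- `𝔽`, an algebraic closure of the field `𝔽₂` with two elements. -/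
abbrev Fbar : Type := AlgebraicClosure (ZMod 2)

/-- `B(𝔽)`, the field of fractions of the ring of Witt vectors `W(𝔽)`. -/
abbrev BF : Type := FractionRing (WittVector 2 Fbar)

/-- The canonical ring homomorphism `ℤ₂ → B(𝔽)`, obtained from the canonical
identification `ℤ₂ ≅ W(𝔽₂)`, functoriality of Witt vectors along `𝔽₂ → 𝔽`, and the
inclusion `W(𝔽) → B(𝔽)`. -/
def canonicalZ2toBF : ℤ_[2] →+* BF :=
  (algebraMap (WittVector 2 Fbar) BF).comp
    ((WittVector.map (algebraMap (ZMod 2) Fbar)).comp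
      (WittVector.equiv (p := 2)).symm.toRingHom)

/-!
Let `|·|` be the absolute value on `B(𝔽)` of the discrete valuation of `W(𝔽)`, normalised by
`|2| = 1/2`. Since `ℤ₂ → W(𝔽)` maps units to units, `|f ·|` is an absolute value on `F`
extending the norm of `ℚ₂`; as `ℚ₂` is complete it is the spectral norm, so `x ∈ F` is
integral over `ℤ₂` exactly when `|f x| ≤ 1`. Hence the units of `O_F` are the elements with
`|f x| = 1`, and a non-unit `x` has `f x` in the maximal ideal `2 W(𝔽)`, so that `x / 2 ∈ O_F`.
Every maximal ideal of `O_F` therefore lies in `(2)`, which is proper.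
-/

open IsDedekindDomain WithZeroMulInt Polynomial

instance : IsDiscreteValuationRing (WittVector 2 Fbar) := WittVector.isDiscreteValuationRing

lemma WittVector.irreducible_two {k : Type*} [Field k] [CharP k 2] :
    Irreducible (2 : WittVector 2 k) := by
  simpa using WittVector.irreducible 2 (k := k)

@[simp, norm_cast]
lemma Subalgebra.coe_ofNat {R A : Type*} [CommSemiring R] [Semiring A] [Algebra R A]
    (S : Subalgebra R A) (n : ℕ) [n.AtLeastTwo] : ((ofNat(n) : S) : A) = ofNat(n) :=
  rfl

theorem PadicInt.isIntegral_of_absoluteValue_le_one {p : ℕ} [Fact p.Prime] {L : Type*} [Field L]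
    [Algebra ℚ_[p] L] [Algebra.IsAlgebraic ℚ_[p] L] [Algebra ℤ_[p] L]
    [IsScalarTower ℤ_[p] ℚ_[p] L] {v : AbsoluteValue L ℝ}
    (hv : ∀ c : ℚ_[p], v (algebraMap ℚ_[p] L c) = ‖c‖) {x : L} (hx : v x ≤ 1) :
    IsIntegral ℤ_[p] x := by
  have hmonic := minpoly.monic (Algebra.IsIntegral.isIntegral (R := ℚ_[p]) x)
  have hcoeff : ∀ n, ‖(minpoly ℚ_[p] x).coeff n‖ ≤ 1 :=
    (spectralValue_le_one_iff hmonic).mp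
      ((spectralNorm_unique_field_norm_ext hv x).symm.trans_le hx)
  have hlifts : minpoly ℚ_[p] x ∈ lifts (algebraMap ℤ_[p] ℚ_[p]) :=
    (lifts_iff_coeff_lifts _).mpr fun n => ⟨⟨_, hcoeff n⟩, rfl⟩
  obtain ⟨q, hq, -, hqmonic⟩ := lifts_and_natDegree_eq_and_monic hlifts hmonic
  refine ⟨q, hqmonic, ?_⟩
  rw [IsScalarTower.algebraMap_eq ℤ_[p] ℚ_[p] L, ← eval₂_map, hq, ← aeval_def,
    minpoly.aeval]

abbrev abvBF : AbsoluteValue BF ℝ :=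
  (IsDiscreteValuationRing.maximalIdeal (WittVector 2 Fbar)).adicAbv (b := 2) one_lt_two

lemma abvBF_two : abvBF 2 = 2⁻¹ := by
  have h := (IsDiscreteValuationRing.maximalIdeal (WittVector 2 Fbar)).intValuation_singleton
    WittVector.irreducible_two.ne_zero WittVector.irreducible_two.maximalIdeal_eq
  rw [← map_ofNat (algebraMap (WittVector 2 Fbar) BF) 2, HeightOneSpectrum.adicAbv_of_algebraMap]
  simp only [HeightOneSpectrum.intAdicAbv, HeightOneSpectrum.intAdicAbvDef, AbsoluteValue.coe_mk,
    MulHom.coe_mk, h, WithZero.exp, toNNReal_neg_apply _ WithZero.coe_ne_zero, WithZero.unzero_coe]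
  simp

lemma abvBF_map_two {R : Type*} [NonAssocSemiring R] (f : R →+* BF) : abvBF (f 2) = 2⁻¹ := by
  rw [map_ofNat, abvBF_two]

lemma abvBF_algebraMap_of_isUnit {w : WittVector 2 Fbar} (hw : IsUnit w) :
    abvBF (algebraMap _ BF w) = 1 :=
  (HeightOneSpectrum.adicAbv_coe_eq_one_iff _ _ _).mpr
    ((IsLocalRing.mem_maximalIdeal w).not.mpr (not_not.mpr hw))

lemma abvBF_canonicalZ2toBF_units (u : ℤ_[2]ˣ) : abvBF (canonicalZ2toBF u) = 1 :=
  abvBF_algebraMap_of_isUnit (u.isUnit.map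
    ((WittVector.map (algebraMap (ZMod 2) Fbar)).comp (WittVector.equiv (p := 2)).symm.toRingHom))

lemma abvBF_canonicalZ2toBF (a : ℤ_[2]) : abvBF (canonicalZ2toBF a) = ‖a‖ := by
  rcases eq_or_ne a 0 with rfl | ha
  · simp
  rw [PadicInt.unitCoeff_spec ha, map_mul, map_pow, map_natCast, Nat.cast_ofNat, map_mul, map_pow,
    abvBF_two, norm_mul, norm_pow, PadicInt.norm_p, PadicInt.norm_units,
    abvBF_canonicalZ2toBF_units]
  norm_num

section

variable {F : Type} [Field F] [Algebra ℤ_[2] F] {f : F →+* BF}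
  (hf : ∀ x : ℤ_[2], f (algebraMap ℤ_[2] F x) = canonicalZ2toBF x)
include hf

lemma exists_algebraMap_eq_of_isIntegral {x : F} (hx : IsIntegral ℤ_[2] x) :
    ∃ a : WittVector 2 Fbar, algebraMap _ BF a = f x :=
  IsIntegrallyClosed.isIntegral_iff.mp (hx.map_of_comp_eq _ f (RingHom.ext hf).symm)

variable [Algebra ℚ_[2] F] [IsScalarTower ℤ_[2] ℚ_[2] F]

lemma abvBF_comp_algebraMap (c : ℚ_[2]) : abvBF (f (algebraMap ℚ_[2] F c)) = ‖c‖ := by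
  obtain ⟨a, b, -, rfl⟩ := IsFractionRing.div_surjective ℤ_[2] c
  simp only [map_div₀, ← IsScalarTower.algebraMap_apply, hf, abvBF_canonicalZ2toBF, norm_div]
  rfl

variable [FiniteDimensional ℚ_[2] F]

lemma isIntegral_iff_abvBF_le_one (x : F) : IsIntegral ℤ_[2] x ↔ abvBF (f x) ≤ 1 := by
  refine ⟨fun hx => ?_, PadicInt.isIntegral_of_absoluteValue_le_one (v := abvBF.comp f.injective)
    (abvBF_comp_algebraMap hf)⟩
  obtain ⟨a, ha⟩ := exists_algebraMap_eq_of_isIntegral hf hx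
  exact ha ▸ HeightOneSpectrum.adicAbv_coe_le_one _ _ a

lemma isIntegral_div_two_of_abvBF_lt_one {x : F} (hx : IsIntegral ℤ_[2] x)
    (hlt : abvBF (f x) < 1) : IsIntegral ℤ_[2] (x / 2) := by
  obtain ⟨a, ha⟩ := exists_algebraMap_eq_of_isIntegral hf hx
  rw [← ha, HeightOneSpectrum.adicAbv_coe_lt_one_iff] at hlt
  obtain ⟨b, rfl⟩ : ∃ b, b * 2 = a := by
    rwa [← Ideal.mem_span_singleton', ← WittVector.irreducible_two.maximalIdeal_eq]
  rw [isIntegral_iff_abvBF_le_one hf, map_div₀, ← ha, map_ofNat, map_mul, map_ofNat,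
    mul_div_cancel_right₀ _ fun h => by simpa [h] using abvBF_two]
  exact HeightOneSpectrum.adicAbv_coe_le_one _ _ b

namespace integralClosure

lemma isUnit_of_abvBF_eq_one (x : integralClosure ℤ_[2] F) (h : abvBF (f x) = 1) : IsUnit x := by
  have hx0 : (x : F) ≠ 0 := fun h0 => by simp [h0] at h
  have hinv : IsIntegral ℤ_[2] (x : F)⁻¹ := by
    rw [isIntegral_iff_abvBF_le_one hf, map_inv₀, map_inv₀, h, inv_one]
  exact IsUnit.of_mul_eq_one (a := x) ⟨_, hinv⟩ (Subtype.ext (mul_inv_cancel₀ hx0))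

lemma two_dvd_of_not_isUnit {x : integralClosure ℤ_[2] F} (hx : ¬IsUnit x) : 2 ∣ x := by
  have hle := (isIntegral_iff_abvBF_le_one hf x).mp x.2
  have hdiv := isIntegral_div_two_of_abvBF_lt_one hf x.2
    (hle.lt_of_ne fun h => hx (isUnit_of_abvBF_eq_one hf x h))
  refine ⟨⟨_, hdiv⟩, Subtype.ext ?_⟩
  rw [MulMemClass.coe_mul, Subalgebra.coe_ofNat,
    mul_div_cancel₀ _ fun h => by simpa [h] using abvBF_map_two f]

lemma not_isUnit_two : ¬IsUnit (2 : integralClosure ℤ_[2] F) := by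
  intro h
  obtain ⟨y, hy⟩ := h.exists_right_inv
  have hle := (isIntegral_iff_abvBF_le_one hf y).mp y.2
  have hy' := congrArg (fun z : integralClosure ℤ_[2] F => abvBF (f z)) hy
  simp only [MulMemClass.coe_mul, OneMemClass.coe_one, Subalgebra.coe_ofNat, map_mul, map_one,
    abvBF_map_two] at hy'
  linarith

end integralClosure

end

/-- Let `F` be a finite field extension of `ℚ₂` admitting a `ℚ₂`-algebra homomorphism
into `B(𝔽)`.  Then `F` is unramified over `ℚ₂`: `2` generates the maximal ideal of the
integral closure `O_F` of `ℤ₂` in `F`, i.e. the ramification index of `O_F` over `ℤ₂`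
equals `1`. -/
theorem unramified_of_embeds_in_BF (F : Type) [Field F] [Algebra ℚ_[2] F]
    [FiniteDimensional ℚ_[2] F]
    [Algebra ℤ_[2] F] [IsScalarTower ℤ_[2] ℚ_[2] F]
    (f : F →+* BF)
    (hf : ∀ x : ℤ_[2], f (algebraMap ℤ_[2] F x) = canonicalZ2toBF x) :
    ∀ I : Ideal (integralClosure ℤ_[2] F), I.IsMaximal →
      I = Ideal.span {(2 : integralClosure ℤ_[2] F)} := by
  intro I hI
  refine hI.eq_of_le (Ideal.span_singleton_ne_top (integralClosure.not_isUnit_two hf))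
    fun x hx => Ideal.mem_span_singleton.mpr ?_
  exact integralClosure.two_dvd_of_not_isUnit hf fun hu => hI.ne_top (I.eq_top_of_isUnit_mem hx hu)
end
end

section
/- Let ℤ_(2) denote the localization of ℤ at the prime 2 (the subring of ℚ of fractions with odd denominator) and let Λ be a free ℤ_(2)-module of finite rank. For every ψ' ∈ Λ, the image of the coset ψ' + 2Λ under the natural map Λ → Λ ⊗_{ℤ_(2)} ℝ is dense in the real vector space Λ ⊗_{ℤ_(2)} ℝ. Consequently, for every nonempty open subset U of Λ ⊗_{ℤ_(2)} ℝ there exists ψ ∈ Λ with ψ − ψ' ∈ 2Λ whose image lies in U. -/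
/-!
The rationals with odd denominator form a subgroup of `ℝ` containing every `3⁻ᵏ`, so it has
arbitrarily small positive elements and is therefore dense. The coset `ψ' + 2Λ` is, coordinatewise,
the image of this dense set under the homeomorphism `x ↦ ψ' i + 2 x` of `ℝ`, and a product of dense
sets is dense.
-/

open Set

/-- `ℤ_(2)` as an additive subgroup of `ℚ`. -/
def Rat.oddDenAddSubgroup : AddSubgroup ℚ where
  carrier := {q | Odd q.den}
  zero_mem' := odd_one
  add_mem' {p q} hp hq := (Nat.odd_mul.2 ⟨hp, hq⟩).of_dvd_nat (Rat.add_den_dvd p q)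
  neg_mem' {q} hq := by rwa [mem_ofPred_eq, Rat.neg_den]

lemma Rat.odd_den_inv_natCast {n : ℕ} (hn : Odd n) : Odd ((n : ℚ)⁻¹).den := by
  rwa [Rat.inv_natCast_den_of_pos hn.pos]

section LinearOrderedField

variable {𝕜 : Type*} [Field 𝕜] [LinearOrder 𝕜] [IsStrictOrderedRing 𝕜] [Archimedean 𝕜]
  [TopologicalSpace 𝕜] [OrderTopology 𝕜]

lemma dense_image_ratCast_odd_den : Dense (((↑) : ℚ → 𝕜) '' {q : ℚ | Odd q.den}) := by
  let S : AddSubgroup 𝕜 := Rat.oddDenAddSubgroup.map (Rat.castHom 𝕜).toAddMonoidHom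
  change Dense (S : Set 𝕜)
  refine S.dense_of_not_isolated_zero fun ε hε => ?_
  obtain ⟨k, hk⟩ := exists_pow_lt_of_lt_one hε (by norm_num : (3 : 𝕜)⁻¹ < 1)
  have hodd : Odd ((((3 ^ k : ℕ) : ℚ))⁻¹).den := Rat.odd_den_inv_natCast (Odd.pow (by decide))
  exact ⟨(3 : 𝕜)⁻¹ ^ k, ⟨_, hodd, by simp [inv_pow]⟩, by positivity, hk⟩

lemma dense_odd_den_affine (a : ℚ) {c : ℚ} (hc : c ≠ 0) :
    Dense {x : 𝕜 | ∃ q : ℚ, Odd q.den ∧ x = ((a + c * q : ℚ) : 𝕜)} := by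
  let e : 𝕜 ≃ₜ 𝕜 :=
    (Homeomorph.mulLeft₀ (c : 𝕜) (Rat.cast_ne_zero.2 hc)).trans (Homeomorph.addLeft (a : 𝕜))
  convert e.isDenseEmbedding.dense_image.2 dense_image_ratCast_odd_den using 1
  ext x
  simp [e, eq_comm]

end LinearOrderedField

theorem dense_coset_two_localization_general (d : ℕ) (ψ' : Fin d → ℚ) :
    Dense {v : Fin d → ℝ | ∃ lam : Fin d → ℚ,
        (∀ i, Odd (lam i).den) ∧ ∀ i, v i = ((ψ' i + 2 * lam i : ℚ) : ℝ)} ∧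
    ∀ U : Set (Fin d → ℝ), IsOpen U → U.Nonempty →
      ∃ lam : Fin d → ℚ, (∀ i, Odd (lam i).den) ∧
        (fun i => ((ψ' i + 2 * lam i : ℚ) : ℝ)) ∈ U := by
  have hdense : Dense {v : Fin d → ℝ | ∃ lam : Fin d → ℚ,
      (∀ i, Odd (lam i).den) ∧ ∀ i, v i = ((ψ' i + 2 * lam i : ℚ) : ℝ)} := by
    convert dense_pi univ fun i _ => dense_odd_den_affine (𝕜 := ℝ) (ψ' i) two_ne_zero using 1
    ext v
    simp only [mem_ofPred_eq, mem_univ_pi, Classical.skolem, forall_and]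
  refine ⟨hdense, fun U hU hne => ?_⟩
  obtain ⟨v, ⟨lam, hlam, hv⟩, hvU⟩ := hdense.exists_mem_open hU hne
  exact ⟨lam, hlam, funext hv ▸ hvU⟩

/-- Model of the localization `ℤ_(2)` of `ℤ` at the prime `2`: the subring of `ℚ` of
fractions with odd (reduced) denominator.  A free `ℤ_(2)`-module `Λ` of finite rank is
modelled as the module of vectors `Fin d → ℚ` all of whose coordinates have odd
denominator, and the natural map `Λ → Λ ⊗_{ℤ_(2)} ℝ` as the coordinatewise inclusion
`ℚ → ℝ` into `Fin d → ℝ` with its standard topology.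

For every `ψ' ∈ Λ`, the image of the coset `ψ' + 2Λ` in `Λ ⊗_{ℤ_(2)} ℝ` is dense;
consequently every nonempty open subset `U` of `Λ ⊗_{ℤ_(2)} ℝ` contains the image of
some `ψ ∈ Λ` with `ψ − ψ' ∈ 2Λ`. -/
theorem dense_coset_two_localization (d : ℕ) (ψ' : Fin d → ℚ)
    (hψ' : ∀ i, Odd (ψ' i).den) :
    Dense {v : Fin d → ℝ | ∃ lam : Fin d → ℚ,
        (∀ i, Odd (lam i).den) ∧ ∀ i, v i = ((ψ' i + 2 * lam i : ℚ) : ℝ)} ∧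
    ∀ U : Set (Fin d → ℝ), IsOpen U → U.Nonempty →
      ∃ lam : Fin d → ℚ, (∀ i, Odd (lam i).den) ∧
        (fun i => ((ψ' i + 2 * lam i : ℚ) : ℝ)) ∈ U :=
  dense_coset_two_localization_general d ψ'
end

section
/- Let k be a perfect field of characteristic 2, W = W(k) its ring of Witt vectors, and σ : W → W the Frobenius automorphism of W. Let N be a W-module, c : N × N → W a symmetric W-bilinear form, and Φ : N → N an additive map that is σ-semilinear (Φ(a·x) = σ(a)·Φ(x) for a ∈ W, x ∈ N) and satisfies c(Φ(x), Φ(y)) = 2·σ(c(x, y)) for all x, y ∈ N. Let F ⊆ N be a W-submodule such that c(v, v) = 0 and Φ(v) ∈ 2N for every v ∈ F. Assume that every x ∈ N can be written as x = y + Φ(u) with u ∈ N and y ∈ N satisfying 2y = Φ(v) for some v ∈ F. Then c(x, x) ∈ 2W for every x ∈ N, i.e., the reduction of c modulo 2W is an alternating form. -/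
theorem two_ne_zero_witt (k : Type*) [Field k] [CharP k 2] [PerfectRing k 2] :
    (2 : WittVector 2 k) ≠ 0 := by
  intro h
  have h1 : ((1 : WittVector 2 k) * (2 : ℕ)).coeff 1 = (1 : WittVector 2 k).coeff 0 ^ 2 :=
    WittVector.mul_charP_coeff_succ (p := 2) _ 0
  rw [show ((2 : ℕ) : WittVector 2 k) = 2 by norm_num, h, mul_zero] at h1
  simp at h1

/-- Let `k` be a perfect field of characteristic `2`, `W = W(k)` its ring of Witt
vectors and `σ` the Frobenius of `W`.  Let `N` be a `W`-module, `c` a symmetric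
`W`-bilinear form on `N`, and `Φ : N → N` a `σ`-semilinear additive map with
`c(Φx, Φy) = 2 σ(c(x,y))`.  Let `F ⊆ N` be a submodule with `c(v,v) = 0` and
`Φ(v) ∈ 2N` for all `v ∈ F`.  If every `x ∈ N` can be written `x = y + Φ(u)` with
`2y = Φ(v)` for some `v ∈ F`, then `c(x,x) ∈ 2W` for all `x ∈ N`, i.e. `c mod 2` is
alternating. -/
theorem c_self_mem_two_of_semilinear (k : Type*) [Field k] [CharP k 2] [PerfectRing k 2]
    (N : Type*) [AddCommGroup N] [Module (WittVector 2 k) N]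
    (c : N →ₗ[WittVector 2 k] N →ₗ[WittVector 2 k] WittVector 2 k)
    (hsymm : ∀ x y : N, c x y = c y x)
    (Φ : N →+ N)
    (hsemi : ∀ (a : WittVector 2 k) (x : N),
      Φ (a • x) = (WittVector.frobenius a : WittVector 2 k) • Φ x)
    (hc : ∀ x y : N, c (Φ x) (Φ y) = 2 * WittVector.frobenius (c x y))
    (F : Submodule (WittVector 2 k) N)
    (hiso : ∀ v ∈ F, c v v = 0)
    (hdiv : ∀ v ∈ F, ∃ w : N, Φ v = (2 : WittVector 2 k) • w)
    (hgen : ∀ x : N, ∃ (u y v : N), v ∈ F ∧ x = y + Φ u ∧ (2 : WittVector 2 k) • y = Φ v) :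
    ∀ x : N, ∃ w : WittVector 2 k, c x x = 2 * w := by
  intro x
  obtain ⟨u, y, v, hvF, hx, h2y⟩ := hgen x
  have h2 : (2 : WittVector 2 k) ≠ 0 := two_ne_zero_witt k
  have hyy : c y y = 0 := by
    have h4 : (2 : WittVector 2 k) * (2 * c y y) = 2 * 0 := by
      have := hc v v
      rw [hiso v hvF, map_zero, mul_zero] at this
      calc (2 : WittVector 2 k) * (2 * c y y)
          = c ((2 : WittVector 2 k) • y) ((2 : WittVector 2 k) • y) := by
            simp only [map_smul, LinearMap.smul_apply, smul_eq_mul]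
        _ = c (Φ v) (Φ v) := by rw [h2y]
        _ = 0 := this
        _ = 2 * 0 := by ring
    have h4' := mul_left_cancel₀ h2 h4
    exact (mul_eq_zero.mp h4').resolve_left h2
  refine ⟨c y (Φ u) + WittVector.frobenius (c u u), ?_⟩
  rw [hx]
  simp only [map_add, LinearMap.add_apply, hyy, hc u u]
  rw [hsymm (Φ u) y]
  ring
end
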